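/- For the threshold protocol P_thr: if C and C' are terminal configurations each containing a leader, then both C and C' are consensus configurations; moreover, if additionally val(C) = val(C'), then O(C) = O(C'). -/

import Mathlib

/-! Formalization of population protocols (Angluin et al.), following
"Towards Efficient Verification of Population Protocols". -/

namespace PopProt

/-- A transition `(p, q) ↦ (p', q')`. -/
abbrev PTrans (Q : Type*) := Q × Q × Q × Q

variable {Q : Type*} [Fintype Q] [DecidableEq Q]

/-- `pre t` is the multiset of the two states consumed by transition `t`. -/
def pre (t : PTrans Q) : Multiset Q := {t.1, t.2.1}

/-- `post t` is the multiset of the two states produced by transition `t`. -/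
def post (t : PTrans Q) : Multiset Q := {t.2.2.1, t.2.2.2}

/-- A transition is silent if it cannot change the current configuration. -/
def SilentT (t : PTrans Q) : Prop := pre t = post t

instance : DecidablePred (SilentT (Q := Q)) := fun t => by
  unfold SilentT; infer_instance

/-- Transitions of the form `(p, q) ↦ (p, q)`. -/
def IsSilentPair (t : PTrans Q) : Prop := ∃ p q : Q, t = (p, q, p, q)

instance : DecidablePred (IsSilentPair (Q := Q)) := fun t => by
  unfold IsSilentPair; infer_instance

/-- A population protocol with states `Q` and input alphabet `A`.
Configurations are multisets over `Q` of cardinality at least 2. -/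
structure Protocol (Q A : Type*) [Fintype Q] [DecidableEq Q] [Fintype A] where
  T : Finset (PTrans Q)
  total : ∀ p q : Q, ∃ p' q' : Q, (p, q, p', q') ∈ T
  inp : A → Q
  out : Q → Bool

/-- `C →t C'`. -/
def StepBy (t : PTrans Q) (C C' : Multiset Q) : Prop :=
  pre t ≤ C ∧ C' = C - pre t + post t

/-- One step of the protocol with transition set `T`. -/
def Step (T : Finset (PTrans Q)) (C C' : Multiset Q) : Prop :=
  ∃ t ∈ T, StepBy t C C'

/-- Reachability `C →* C'`. -/
def Reach (T : Finset (PTrans Q)) : Multiset Q → Multiset Q → Prop :=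
  Relation.ReflTransGen (Step T)

/-- `C →w C'` for a finite sequence `w` of transitions. -/
def SeqStep (T : Finset (PTrans Q)) : List (PTrans Q) → Multiset Q → Multiset Q → Prop
  | [], C, C' => C' = C
  | t :: w, C, C' => t ∈ T ∧ ∃ D, StepBy t C D ∧ SeqStep T w D C'

/-- An execution: an infinite sequence of configurations related by steps. -/
def IsExec (T : Finset (PTrans Q)) (e : ℕ → Multiset Q) : Prop :=
  2 ≤ Multiset.card (e 0) ∧ ∀ i, Step T (e i) (e (i + 1))

/-- Fairness: if a step `C → C'` is possible and `C` occurs infinitely often,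
then the step is taken infinitely often. -/
def Fair (T : Finset (PTrans Q)) (e : ℕ → Multiset Q) : Prop :=
  ∀ C C' : Multiset Q, Step T C C' →
    {i | e i = C}.Infinite → {j | e j = C ∧ e (j + 1) = C'}.Infinite

/-- An execution is silent if it is eventually constant. -/
def SilentExec (e : ℕ → Multiset Q) : Prop := ∃ n : ℕ, ∀ i ≥ n, e i = e n

/-- A configuration is terminal if every transition enabled at it is silent. -/
def Terminal (T : Finset (PTrans Q)) (C : Multiset Q) : Prop :=
  ∀ t ∈ T, pre t ≤ C → SilentT t

/-- `C` is a consensus configuration with output `b`. -/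
def Consensus (out : Q → Bool) (C : Multiset Q) (b : Bool) : Prop :=
  ∀ q ∈ C, out q = b

/-- An execution stabilizes to `b`. -/
def Stabilizes (out : Q → Bool) (e : ℕ → Multiset Q) (b : Bool) : Prop :=
  ∃ n : ℕ, ∀ i ≥ n, Consensus out (e i) b

variable {A : Type*} [Fintype A]

/-- The initial configuration determined by input `X`. -/
def init (P : Protocol Q A) (X : Multiset A) : Multiset Q := X.map P.inp

/-- A protocol is silent if every fair execution from every configuration is silent. -/
def IsSilentProtocol (P : Protocol Q A) : Prop :=
  ∀ e : ℕ → Multiset Q, IsExec P.T e → Fair P.T e → SilentExec e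

/-- A protocol is well-specified if for every input every fair execution from the
corresponding initial configuration stabilizes to a common boolean value. -/
def WellSpecified (P : Protocol Q A) : Prop :=
  ∀ X : Multiset A, 2 ≤ Multiset.card X → ∃ b : Bool,
    ∀ e : ℕ → Multiset Q, e 0 = init P X → (∀ i, Step P.T (e i) (e (i + 1))) →
      Fair P.T e → Stabilizes P.out e b

/-- A protocol computes the predicate `φ`. -/
def Computes (P : Protocol Q A) (φ : Multiset A → Bool) : Prop :=
  ∀ X : Multiset A, 2 ≤ Multiset.card X →
    ∀ e : ℕ → Multiset Q, e 0 = init P X → (∀ i, Step P.T (e i) (e (i + 1))) →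
      Fair P.T e → Stabilizes P.out e (φ X)

/-- Termination: from every configuration some terminal configuration is reachable. -/
def Termination (P : Protocol Q A) : Prop :=
  ∀ C : Multiset Q, 2 ≤ Multiset.card C →
    ∃ C' : Multiset Q, Reach P.T C C' ∧ Terminal P.T C'

/-- NoSplitTerminal: all terminal configurations reachable from an initial configuration
are consensus configurations with one common output. -/
def NoSplitTerminal (P : Protocol Q A) : Prop :=
  ∀ X : Multiset A, 2 ≤ Multiset.card X → ∃ b : Bool,
    ∀ C' : Multiset Q, Reach P.T (init P X) C' → Terminal P.T C' →
      Consensus P.out C' b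

/-- All transitions of the form `(p, q) ↦ (p, q)`. -/
def silents (Q : Type*) [Fintype Q] [DecidableEq Q] : Finset (PTrans Q) :=
  Finset.univ.image fun pq : Q × Q => (pq.1, pq.2, pq.1, pq.2)

/-- The transition set of the induced protocol `P[S]`. -/
def induced (S : Finset (PTrans Q)) : Finset (PTrans Q) := S ∪ silents Q

/-- `(Ts 0, …, Ts (n-1))` is an ordered partition witnessing LayeredTermination. -/
def LayeredWitness (P : Protocol Q A) (n : ℕ) (Ts : Fin n → Finset (PTrans Q)) : Prop :=
  (∀ i, (Ts i).Nonempty) ∧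
  (∀ i j, i ≠ j → Disjoint (Ts i) (Ts j)) ∧
  Finset.univ.biUnion Ts = P.T ∧
  ∀ i : Fin n,
    (∀ e : ℕ → Multiset Q, IsExec (induced (Ts i)) e → SilentExec e) ∧
    (∀ C C' : Multiset Q, 2 ≤ Multiset.card C →
      Reach (induced (Ts i)) C C' →
      Terminal (induced ((Finset.univ.filter fun j => j < i).biUnion Ts)) C →
      Terminal (induced ((Finset.univ.filter fun j => j < i).biUnion Ts)) C')

/-- LayeredTermination. -/
def LayeredTermination (P : Protocol Q A) : Prop :=
  ∃ (n : ℕ) (Ts : Fin n → Finset (PTrans Q)), LayeredWitness P n Ts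

/-- `•R`, relative to the transition set `T`. -/
def preSetOf (T : Finset (PTrans Q)) (R : Finset Q) : Finset (PTrans Q) :=
  T.filter fun t => ∃ q ∈ R, q ∈ post t

/-- `R•`, relative to the transition set `T`. -/
def postSetOf (T : Finset (PTrans Q)) (R : Finset Q) : Finset (PTrans Q) :=
  T.filter fun t => ∃ q ∈ R, q ∈ pre t

/-- `R` is a `U`-trap: `R• ∩ U ⊆ •R`. -/
def IsTrap (T U : Finset (PTrans Q)) (R : Finset Q) : Prop :=
  postSetOf T R ∩ U ⊆ preSetOf T R

/-- `R` is a `U`-siphon: `•R ∩ U ⊆ R•`. -/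
def IsSiphon (T U : Finset (PTrans Q)) (R : Finset Q) : Prop :=
  preSetOf T R ∩ U ⊆ postSetOf T R

/-- The flow equations for `(C, C', x)`. -/
def FlowEq (T : Finset (PTrans Q)) (C C' : Multiset Q) (x : PTrans Q → ℕ) : Prop :=
  ∀ q : Q, (C'.count q : ℤ) =
    (C.count q : ℤ) + ∑ t ∈ T, (x t : ℤ) * (((post t).count q : ℤ) - ((pre t).count q : ℤ))

/-- The support of `x` within `T`. -/
def suppIn (T : Finset (PTrans Q)) (x : PTrans Q → ℕ) : Finset (PTrans Q) :=
  T.filter fun t => x t ≠ 0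

/-- Potential reachability `C ⇒ₓ C'` (flow equations plus trap and siphon constraints,
with `U = supp x`). -/
def PotReach (T : Finset (PTrans Q)) (C C' : Multiset Q) (x : PTrans Q → ℕ) : Prop :=
  FlowEq T C C' x ∧
  (∀ R : Finset Q, IsTrap T (suppIn T x) R → (∀ q ∈ R, q ∉ C') →
    preSetOf T R ∩ suppIn T x = ∅) ∧
  (∀ R : Finset Q, IsSiphon T (suppIn T x) R → (∀ q ∈ R, q ∉ C) →
    postSetOf T R ∩ suppIn T x = ∅)

/-- StrongConsensus: all terminal configurations potentially reachable from an initial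
configuration are consensus configurations with one common output. -/
def StrongConsensus (P : Protocol Q A) : Prop :=
  ∀ X : Multiset A, 2 ≤ Multiset.card X → ∃ b : Bool,
    ∀ (C' : Multiset Q) (x : PTrans Q → ℕ),
      PotReach P.T (init P X) C' x → Terminal P.T C' → Consensus P.out C' b

/-- `C` is `U`-dead: no transition of `U` can change `C`. -/
def UDeadConf (U : Finset (PTrans Q)) (C : Multiset Q) : Prop :=
  ∀ t ∈ U, ∀ C' : Multiset Q, StepBy t C C' → C' = C

/-- The protocol with transitions `T` is `U`-dead: from every `U`-dead configuration,
every reachable configuration is `U`-dead. -/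
def UDead (T U : Finset (PTrans Q)) : Prop :=
  ∀ C₀ : Multiset Q, 2 ≤ Multiset.card C₀ → UDeadConf U C₀ →
    ∀ C : Multiset Q, Reach T C₀ C → UDeadConf U C

end PopProt
namespace PopProt

section Threshold

noncomputable section

variable (k : ℕ) (a : Fin k → ℤ) (c : ℤ)

/-- `vmax = max(|a₁|, …, |a_k|, |c| + 1)`. -/
def vmax : ℤ := max ((Finset.univ.sup fun i : Fin k => (a i).natAbs : ℕ) : ℤ) (|c| + 1)

lemma vmax_pos : 0 < vmax k a c := by
  have h : (0 : ℤ) ≤ |c| := abs_nonneg c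
  exact lt_max_of_lt_right (by omega)

/-- The value range `[-vmax, vmax]`. -/
abbrev Vr := ↥(Finset.Icc (-(vmax k a c)) (vmax k a c))

/-- States of the threshold protocol: a leader bit, a value and an opinion. -/
abbrev Qthr := Bool × Vr k a c × Bool

/-- `f(m, n) = max(-vmax, min(vmax, m + n))`. -/
def fthr (m n : ℤ) : ℤ := max (-(vmax k a c)) (min (vmax k a c) (m + n))

/-- `g(m, n) = (m + n) - f(m, n)`. -/
def gthr (m n : ℤ) : ℤ := m + n - fthr k a c m n

/-- `b(m, n) = (f(m, n) < c)`. -/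
def bthr (m n : ℤ) : Bool := decide (fthr k a c m n < c)

lemma fthr_mem (m n : ℤ) : fthr k a c m n ∈ Finset.Icc (-(vmax k a c)) (vmax k a c) := by
  have h := vmax_pos k a c
  simp only [Finset.mem_Icc, fthr]
  exact ⟨le_max_left _ _, max_le (by omega) (min_le_left _ _)⟩

lemma gthr_mem (m n : ℤ) (hm : m ∈ Finset.Icc (-(vmax k a c)) (vmax k a c))
    (hn : n ∈ Finset.Icc (-(vmax k a c)) (vmax k a c)) :
    gthr k a c m n ∈ Finset.Icc (-(vmax k a c)) (vmax k a c) := by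
  have h := vmax_pos k a c
  simp only [Finset.mem_Icc] at hm hn ⊢
  simp only [gthr, fthr]
  rw [max_def, min_def]
  split_ifs <;> omega

/-- `f` on the value range. -/
def fV (m n : Vr k a c) : Vr k a c := ⟨fthr k a c m n, fthr_mem k a c m n⟩

/-- `g` on the value range. -/
def gV (m n : Vr k a c) : Vr k a c := ⟨gthr k a c m n, gthr_mem k a c m n m.2 n.2⟩

instance : DecidableEq (Vr k a c) := by unfold Vr; infer_instance

instance : Fintype (Vr k a c) := by unfold Vr; infer_instance

instance : DecidableEq (Qthr k a c) := by infer_instance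

instance : Fintype (Qthr k a c) := by infer_instance

/-- Non-silent transitions of the threshold protocol:
`(1, n, o), (l, n', o') ↦ (1, f(n, n'), b(n, n')), (0, g(n, n'), b(n, n'))`. -/
def IsThrTrans (t : PTrans (Qthr k a c)) : Prop :=
  ∃ (n n' : Vr k a c) (l o o' : Bool),
    t = ((true, n, o), (l, n', o'),
         (true, fV k a c n n', bthr k a c (n : ℤ) (n' : ℤ)),
         (false, gV k a c n n', bthr k a c (n : ℤ) (n' : ℤ)))

instance : DecidablePred (IsThrTrans k a c) := fun t => by
  unfold IsThrTrans; infer_instance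

/-- Transition set of the threshold protocol. -/
def Tthr : Finset (PTrans (Qthr k a c)) :=
  Finset.univ.filter fun t => IsThrTrans k a c t ∨ IsSilentPair t

lemma a_mem (i : Fin k) : a i ∈ Finset.Icc (-(vmax k a c)) (vmax k a c) := by
  have h1 : (a i).natAbs ≤ Finset.univ.sup fun j : Fin k => (a j).natAbs :=
    Finset.le_sup (f := fun j : Fin k => (a j).natAbs) (Finset.mem_univ i)
  have h2 : ((Finset.univ.sup fun j : Fin k => (a j).natAbs : ℕ) : ℤ) ≤ vmax k a c :=
    le_max_left _ _
  simp only [Finset.mem_Icc]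
  omega

/-- The threshold protocol `P_thr` computing `a₁x₁ + ⋯ + a_kx_k < c`. -/
def Pthr : Protocol (Qthr k a c) (Fin k) where
  T := Tthr k a c
  total := fun p q => ⟨p, q, by
    simp only [Tthr, Finset.mem_filter, Finset.mem_univ, true_and]
    exact Or.inr ⟨p, q, rfl⟩⟩
  inp := fun i => (true, ⟨a i, a_mem k a c i⟩, decide (a i < c))
  out := fun q => q.2.2

/-- `val(C) = Σ_q C(q) · val(q)` where `val(ℓ, n, o) = n`. -/
def valC (C : Multiset (Qthr k a c)) : ℤ := (C.map fun q => ((q.2.1 : ℤ))).sum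

/-- `C` contains a leader. -/
def hasLeader (C : Multiset (Qthr k a c)) : Prop := ∃ q ∈ C, q.1 = true

/-- The value `0` of the value range. -/
def zeroV : Vr k a c :=
  ⟨0, by have := vmax_pos k a c; simp only [Finset.mem_Icc]; omega⟩

/-- `L₀ = {(1, x, 0) : c ≤ x ≤ vmax}`. -/
def L0set : Finset (Qthr k a c) :=
  Finset.univ.filter fun q =>
    q.1 = true ∧ q.2.2 = false ∧ c ≤ (q.2.1 : ℤ) ∧ (q.2.1 : ℤ) ≤ vmax k a c

/-- `L₁ = {(1, x, 1) : -vmax ≤ x < c}`. -/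
def L1set : Finset (Qthr k a c) :=
  Finset.univ.filter fun q =>
    q.1 = true ∧ q.2.2 = true ∧ -(vmax k a c) ≤ (q.2.1 : ℤ) ∧ (q.2.1 : ℤ) < c

/-- `N₀ = {(0, 0, 0)}`. -/
def N0set : Finset (Qthr k a c) := {(false, zeroV k a c, false)}

/-- `N₁ = {(0, 0, 1)}`. -/
def N1set : Finset (Qthr k a c) := {(false, zeroV k a c, true)}

/-- `T₁ = {t ∈ T : pre t ≠ ⟦q, r⟧ for all q ∈ L₀, r ∈ N₁}`. -/
def T1thr : Finset (PTrans (Qthr k a c)) :=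
  (Tthr k a c).filter fun t => ∀ q ∈ L0set k a c, ∀ r ∈ N1set k a c, pre t ≠ {q, r}

/-- `T₂ = T ∖ T₁`. -/
def T2thr : Finset (PTrans (Qthr k a c)) := Tthr k a c \ T1thr k a c

/-- `S₁ = {t ∈ T : pre t ≠ ⟦q, r⟧ for all q ∈ L₁, r ∈ N₀}`. -/
def S1thr : Finset (PTrans (Qthr k a c)) :=
  (Tthr k a c).filter fun t => ∀ q ∈ L1set k a c, ∀ r ∈ N0set k a c, pre t ≠ {q, r}

/-- `S₂ = T ∖ S₁`. -/
def S2thr : Finset (PTrans (Qthr k a c)) := Tthr k a c \ S1thr k a c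

end

end Threshold

end PopProt

/-! In a terminal configuration the leader `(1, n, o)` interacts silently with every other
agent `(ℓ, n', o')`; as the leader is the only leader after such an interaction, it must be
mapped to itself, so `f(n, n') = n` and every opinion equals `b(n, n') = (n < c)`. Since
`-vmax < c < vmax`, `f(n, n') = n` means that `n' = 0` or that `n = ±vmax` and `n'` has the
same sign, so `val(C)` lies on the same side of `c` as `n`. Hence every agent's opinion is
`val(C) < c`. -/

namespace PopProt

section ThresholdTerminal

variable {k : ℕ} {a : Fin k → ℤ} {c : ℤ}

lemma neg_vmax_lt_and_lt_vmax : -vmax k a c < c ∧ c < vmax k a c := by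
  have : |c| + 1 ≤ vmax k a c := le_max_right _ _
  constructor <;> linarith [neg_abs_le c, le_abs_self c]

lemma fthr_eq_left {m n : ℤ} (h : fthr k a c m n = m) :
    (m = vmax k a c ∧ 0 ≤ n) ∨ (m = -vmax k a c ∧ n ≤ 0) ∨ n = 0 := by
  have := vmax_pos k a c
  simp only [fthr, max_def, min_def] at h
  split_ifs at h <;> omega

lemma add_sum_lt_iff_of_fthr_eq_left {m : ℤ} {s : Multiset ℤ}
    (hs : ∀ x ∈ s, fthr k a c m x = m) : m + s.sum < c ↔ m < c := by
  obtain ⟨hlo, hhi⟩ : -vmax k a c < c ∧ c < vmax k a c := neg_vmax_lt_and_lt_vmax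
  by_cases hmax : m = vmax k a c
  · have : 0 ≤ s.sum := Multiset.sum_nonneg fun x hx => by
      rcases fthr_eq_left (hs x hx) with h | h | h <;> omega
    omega
  by_cases hmin : m = -vmax k a c
  · have : s.sum ≤ 0 := by
      simpa using Multiset.sum_le_card_nsmul s 0 fun x hx => by
        rcases fthr_eq_left (hs x hx) with h | h | h <;> omega
    omega
  have : s.sum = 0 := Multiset.sum_eq_zero fun x hx => by
    rcases fthr_eq_left (hs x hx) with h | h | h <;> omega
  simp [this]

lemma Terminal.fthr_eq_and_opinion_eq_of_leader {C : Multiset (Qthr k a c)}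
    (hT : Terminal (Tthr k a c) C) {n : Vr k a c} {o : Bool} (hq : (true, n, o) ∈ C)
    {r : Qthr k a c}
    (hr : r ∈ C.erase (true, n, o)) :
    fthr k a c n r.2.1 = n ∧ o = decide (n < c) ∧ r.2.2 = decide (n < c) := by
  obtain ⟨l, n', o'⟩ := r
  have hmem : ((true, n, o), (l, n', o'), (true, fV k a c n n', bthr k a c n n'),
      (false, gV k a c n n', bthr k a c n n')) ∈ Tthr k a c := by
    simp only [Tthr, Finset.mem_filter, Finset.mem_univ, true_and]
    exact Or.inl ⟨n, n', l, o, o', rfl⟩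
  have hpre : ({(true, n, o), (l, n', o')} : Multiset (Qthr k a c)) ≤ C := by
    rw [← Multiset.cons_erase hq]
    exact Multiset.cons_le_cons _ (Multiset.singleton_le.2 hr)
  have hsilent : (true, n, o) ::ₘ {(l, n', o')} =
      (true, fV k a c n n', bthr k a c n n') ::ₘ {(false, gV k a c n n', bthr k a c n n')} :=
    hT _ hmem hpre
  rcases Multiset.cons_eq_cons.1 hsilent with ⟨hlead, hother⟩ | ⟨-, cs, -, hcs⟩
  · rw [Multiset.singleton_inj] at hother
    simp only [Prod.mk.injEq] at hlead hother
    have hf : fthr k a c n n' = n := (congrArg Subtype.val hlead.2.1).symm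
    simp only [bthr, hf] at hlead hother
    exact ⟨hf, hlead.2.2, hother.2.2⟩
  · simp at hcs

theorem Terminal.opinion_eq_decide_valC_lt {C : Multiset (Qthr k a c)}
    (hT : Terminal (Tthr k a c) C) (hC : 2 ≤ Multiset.card C) (hL : hasLeader k a c C) :
    ∀ p ∈ C, p.2.2 = decide (valC k a c C < c) := by
  obtain ⟨⟨_, n, o⟩, hq, rfl⟩ := hL
  have hCE := Multiset.cons_erase hq
  have hval : valC k a c C < c ↔ n < c := by
    rw [← hCE, valC, Multiset.map_cons, Multiset.sum_cons]
    exact add_sum_lt_iff_of_fthr_eq_left <| Multiset.forall_mem_map_iff.2 fun r hr =>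
      (hT.fthr_eq_and_opinion_eq_of_leader hq hr).1
  obtain ⟨r, hr⟩ : ∃ r, r ∈ C.erase (true, n, o) := Multiset.exists_mem_of_ne_zero <| by
    rw [← Multiset.card_pos, Multiset.card_erase_of_mem hq, Nat.pred_eq_sub_one]
    omega
  intro p hp
  rw [decide_eq_decide.2 hval]
  rcases Multiset.mem_cons.1 (hCE ▸ hp) with rfl | hp
  · exact (hT.fthr_eq_and_opinion_eq_of_leader hq hr).2.1
  · exact (hT.fthr_eq_and_opinion_eq_of_leader hq hp).2.2

end ThresholdTerminal

end PopProt

open PopProt in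
theorem threshold_terminal_leader_consensus_general
    (k : ℕ) (a : Fin k → ℤ) (c : ℤ)
    (C C' : Multiset (Qthr k a c)) (hC : 2 ≤ Multiset.card C) (hC' : 2 ≤ Multiset.card C')
    (hTC : Terminal (Pthr k a c).T C) (hTC' : Terminal (Pthr k a c).T C')
    (hL : hasLeader k a c C) (hL' : hasLeader k a c C') :
    (∃ b : Bool, Consensus (Pthr k a c).out C b) ∧
    (∃ b : Bool, Consensus (Pthr k a c).out C' b) ∧
    (valC k a c C = valC k a c C' →
      ∀ p ∈ C, ∀ p' ∈ C', (Pthr k a c).out p = (Pthr k a c).out p') := by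
  have hop := hTC.opinion_eq_decide_valC_lt hC hL
  have hop' := hTC'.opinion_eq_decide_valC_lt hC' hL'
  refine ⟨⟨_, hop⟩, ⟨_, hop'⟩, fun hval p hp p' hp' => ?_⟩
  change p.2.2 = p'.2.2
  rw [hop p hp, hop' p' hp', hval]

open PopProt in
/-- For the threshold protocol: terminal configurations containing a leader are
consensus configurations, and two such configurations with equal `val` have the
same output. -/
theorem threshold_terminal_leader_consensus
    (k : ℕ) (a : Fin k → ℤ) (c : ℤ) (hk : 1 ≤ k)
    (C C' : Multiset (Qthr k a c)) (hC : 2 ≤ Multiset.card C) (hC' : 2 ≤ Multiset.card C')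
    (hTC : Terminal (Pthr k a c).T C) (hTC' : Terminal (Pthr k a c).T C')
    (hL : hasLeader k a c C) (hL' : hasLeader k a c C') :
    (∃ b : Bool, Consensus (Pthr k a c).out C b) ∧
    (∃ b : Bool, Consensus (Pthr k a c).out C' b) ∧
    (valC k a c C = valC k a c C' →
      ∀ p ∈ C, ∀ p' ∈ C', (Pthr k a c).out p = (Pthr k a c).out p') :=
  threshold_terminal_leader_consensus_general k a c C C' hC hC' hTC hTC' hL hL'
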